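/- Let U ∈ ℝ^{m×r} and Q ∈ ℝ^{m×(m-r)} have orthonormal columns with Uᵀ·Q = 0, and let G ∈ ℝ^{m×s} be such that Qᵀ·G has full column rank. Then Q·Qᵀ − P_{R(Q·Qᵀ·G)} equals the orthogonal projection onto R(Q) ∩ R(Q·Qᵀ·G)^⊥, which is the orthogonal complement of R([U, G]) = R(U) + R(G). -/

import Mathlib

/-!
With `E = Q Qᵀ` and `W = E G`, the matrix `P` is `E - W (WᵀW)⁻¹ Wᵀ`: the orthogonal projection
onto `R(Q)` minus the orthogonal projection onto `R(W)` (`W` has full column rank since `Q` has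
orthonormal columns and `Qᵀ G` has full column rank). As `R(W) ⊆ R(E)`, the two projections
commute and their difference is the orthogonal projection onto `R(E) ∩ R(W)ᗮ`. For `x ∈ R(E)` one
has `Wᵀ x = Gᵀ E x = Gᵀ x`, so this space is `R(Q) ∩ R(G)ᗮ`, and `R(Q) = R(U)ᗮ` by counting
dimensions; hence it is `R(U)ᗮ ∩ R(G)ᗮ = (R(U) + R(G))ᗮ`.
-/

namespace Matrix

section EuclideanRange

variable {m n : Type*} [Fintype n] [DecidableEq n]

lemma mem_range_toEuclideanLin_iff (M : Matrix m n ℝ) (x : EuclideanSpace ℝ m) :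
    x ∈ LinearMap.range (toEuclideanLin M) ↔ ∃ y : n → ℝ, M *ᵥ y = x.ofLp := by
  constructor
  · rintro ⟨y, rfl⟩
    exact ⟨y.ofLp, rfl⟩
  · rintro ⟨y, hy⟩
    exact ⟨WithLp.toLp 2 y, congrArg (WithLp.toLp 2) hy⟩

variable [Fintype m] [DecidableEq m]

lemma mem_orthogonal_range_toEuclideanLin_iff (M : Matrix m n ℝ) (x : EuclideanSpace ℝ m) :
    x ∈ (LinearMap.range (toEuclideanLin M))ᗮ ↔ Mᵀ *ᵥ x.ofLp = 0 := by
  rw [LinearMap.orthogonal_range, ← toEuclideanLin_conjTranspose_eq_adjoint,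
    conjTranspose_eq_transpose_of_trivial, LinearMap.mem_ker, toLpLin_apply]
  exact WithLp.toLp_eq_zero 2

omit [DecidableEq m] in
lemma finrank_range_toEuclideanLin (M : Matrix m n ℝ) :
    Module.finrank ℝ (LinearMap.range (toEuclideanLin M)) = M.rank := by
  rw [rank_eq_finrank_range_toLin M (EuclideanSpace.basisFun m ℝ).toBasis
    (EuclideanSpace.basisFun n ℝ).toBasis, toEuclideanLin_eq_toLin_orthonormal]

lemma mem_range_toEuclideanLin_iff_of_isIdempotentElem {E : Matrix m m ℝ}
    (hE : IsIdempotentElem E) (x : EuclideanSpace ℝ m) :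
    x ∈ LinearMap.range (toEuclideanLin E) ↔ E *ᵥ x.ofLp = x.ofLp := by
  rw [mem_range_toEuclideanLin_iff]
  constructor
  · rintro ⟨y, hy⟩
    rw [← hy, mulVec_mulVec, hE.eq]
  · exact fun h ↦ ⟨_, h⟩

end EuclideanRange

section FullRank

variable {m n : Type*} [Fintype m] [Fintype n] [DecidableEq n]

lemma isUnit_of_rank_eq_card {K : Type*} [Field K] {A : Matrix n n K}
    (h : A.rank = Fintype.card n) : IsUnit A := by
  rw [← mulVec_surjective_iff_isUnit, ← coe_mulVecLin, ← LinearMap.range_eq_top]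
  exact Submodule.eq_top_of_finrank_eq (by rw [← rank, h, Module.finrank_fintype_fun_eq_card])

lemma isUnit_det_transpose_mul_self {A : Matrix m n ℝ} (h : A.rank = Fintype.card n) :
    IsUnit (Aᵀ * A).det :=
  (isUnit_iff_isUnit_det _).1 (isUnit_of_rank_eq_card (by rw [rank_transpose_mul_self, h]))

lemma rank_eq_card_of_transpose_mul_self_eq_one {Q : Matrix m n ℝ} (hQ : Qᵀ * Q = 1) :
    Q.rank = Fintype.card n := by
  rw [← rank_transpose_mul_self, hQ, rank_one]

end FullRank

section OrthonormalColumns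

variable {m κ : Type*} [Fintype m] [Fintype κ] [DecidableEq κ]

lemma rank_mul_of_transpose_mul_self_eq_one {ι : Type*} [Fintype ι] {Q : Matrix m κ ℝ}
    (hQ : Qᵀ * Q = 1) (X : Matrix κ ι ℝ) : (Q * X).rank = X.rank :=
  le_antisymm (rank_mul_le_right Q X) <| by
    simpa [← Matrix.mul_assoc, hQ] using rank_mul_le_right Qᵀ (Q * X)

lemma isIdempotentElem_mul_transpose {Q : Matrix m κ ℝ} (hQ : Qᵀ * Q = 1) :
    IsIdempotentElem (Q * Qᵀ) := by
  rw [IsIdempotentElem, Matrix.mul_assoc, ← Matrix.mul_assoc Qᵀ, hQ, Matrix.one_mul]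

variable [DecidableEq m]

lemma range_toEuclideanLin_mul_transpose {Q : Matrix m κ ℝ} (hQ : Qᵀ * Q = 1) :
    LinearMap.range (toEuclideanLin (Q * Qᵀ)) = LinearMap.range (toEuclideanLin Q) := by
  ext x
  rw [mem_range_toEuclideanLin_iff_of_isIdempotentElem (isIdempotentElem_mul_transpose hQ),
    mem_range_toEuclideanLin_iff]
  constructor
  · exact fun h ↦ ⟨Qᵀ *ᵥ x.ofLp, by rw [mulVec_mulVec, h]⟩
  · rintro ⟨y, hy⟩
    rw [← hy, mulVec_mulVec, Matrix.mul_assoc, hQ, Matrix.mul_one]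

lemma range_toEuclideanLin_eq_orthogonal {ι : Type*} [Fintype ι] [DecidableEq ι]
    {U : Matrix m ι ℝ} {Q : Matrix m κ ℝ}
    (hU : Uᵀ * U = 1) (hQ : Qᵀ * Q = 1) (hUQ : Uᵀ * Q = 0)
    (hcard : Fintype.card ι + Fintype.card κ = Fintype.card m) :
    LinearMap.range (toEuclideanLin Q) = (LinearMap.range (toEuclideanLin U))ᗮ := by
  refine Submodule.eq_of_le_of_finrank_eq (fun x hx ↦ ?_) ?_
  · obtain ⟨y, hy⟩ := (mem_range_toEuclideanLin_iff Q x).1 hx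
    rw [mem_orthogonal_range_toEuclideanLin_iff, ← hy, mulVec_mulVec, hUQ, zero_mulVec]
  · have := (LinearMap.range (toEuclideanLin U)).finrank_add_finrank_orthogonal
    rw [finrank_range_toEuclideanLin, rank_eq_card_of_transpose_mul_self_eq_one hU,
      finrank_euclideanSpace] at this
    rw [finrank_range_toEuclideanLin, rank_eq_card_of_transpose_mul_self_eq_one hQ]
    omega

end OrthonormalColumns

section ColumnSpaceProjection

variable {m n : Type*} [Fintype m] [Fintype n] [DecidableEq n]

/-- The orthogonal projection onto the column space of `W` when `W` has full column rank;
otherwise `(Wᵀ * W)⁻¹` is a junk value. -/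
noncomputable def colSpaceProj (W : Matrix m n ℝ) : Matrix m m ℝ := W * (Wᵀ * W)⁻¹ * Wᵀ

variable {E : Matrix m m ℝ} {W : Matrix m n ℝ}

lemma isSymm_colSpaceProj (W : Matrix m n ℝ) : (colSpaceProj W).IsSymm := by
  simp [colSpaceProj, IsSymm, transpose_mul, transpose_nonsing_inv, Matrix.mul_assoc]

lemma transpose_mul_colSpaceProj (hW : W.rank = Fintype.card n) : Wᵀ * colSpaceProj W = Wᵀ := by
  rw [colSpaceProj, ← Matrix.mul_assoc, ← Matrix.mul_assoc,
    mul_nonsing_inv _ (isUnit_det_transpose_mul_self hW), Matrix.one_mul]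

lemma isIdempotentElem_colSpaceProj (hW : W.rank = Fintype.card n) :
    IsIdempotentElem (colSpaceProj W) := by
  rw [IsIdempotentElem]
  nth_rw 1 [colSpaceProj]
  rw [Matrix.mul_assoc, transpose_mul_colSpaceProj hW, colSpaceProj]

lemma mul_colSpaceProj_of_mul_eq (hEW : E * W = W) : E * colSpaceProj W = colSpaceProj W := by
  simp only [colSpaceProj, ← Matrix.mul_assoc, hEW]

lemma colSpaceProj_mul_of_mul_eq (hE : E.IsSymm) (hEW : E * W = W) :
    colSpaceProj W * E = colSpaceProj W := by
  simpa only [transpose_mul, hE.eq, (isSymm_colSpaceProj W).eq] using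
    congrArg transpose (mul_colSpaceProj_of_mul_eq hEW)

lemma colSpaceProj_mul (hE : E.IsSymm) (hEE : IsIdempotentElem E) (G : Matrix m n ℝ) :
    colSpaceProj (E * G) = E * G * (Gᵀ * E * G)⁻¹ * (Gᵀ * E) := by
  rw [colSpaceProj, transpose_mul, hE.eq, Matrix.mul_assoc Gᵀ E (E * G), ← Matrix.mul_assoc E E G,
    hEE.eq, ← Matrix.mul_assoc Gᵀ E G]

lemma isSymm_sub_colSpaceProj (hE : E.IsSymm) : (E - colSpaceProj W).IsSymm :=
  hE.sub (isSymm_colSpaceProj W)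

lemma isIdempotentElem_sub_colSpaceProj (hE : E.IsSymm) (hEE : IsIdempotentElem E)
    (hEW : E * W = W) (hW : W.rank = Fintype.card n) :
    IsIdempotentElem (E - colSpaceProj W) := by
  rw [IsIdempotentElem, sub_mul, mul_sub, mul_sub, hEE.eq, mul_colSpaceProj_of_mul_eq hEW,
    colSpaceProj_mul_of_mul_eq hE hEW, (isIdempotentElem_colSpaceProj hW).eq]
  abel

lemma range_toEuclideanLin_sub_colSpaceProj [DecidableEq m] (hE : E.IsSymm)
    (hEE : IsIdempotentElem E) (hEW : E * W = W) (hW : W.rank = Fintype.card n) :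
    LinearMap.range (toEuclideanLin (E - colSpaceProj W)) =
      LinearMap.range (toEuclideanLin E) ⊓ (LinearMap.range (toEuclideanLin W))ᗮ := by
  ext x
  rw [Submodule.mem_inf, mem_range_toEuclideanLin_iff_of_isIdempotentElem
      (isIdempotentElem_sub_colSpaceProj hE hEE hEW hW),
    mem_range_toEuclideanLin_iff_of_isIdempotentElem hEE,
    mem_orthogonal_range_toEuclideanLin_iff]
  have hWE : Wᵀ * E = Wᵀ := by rw [← hE.eq, ← transpose_mul, hEW]
  constructor
  · intro hx
    rw [← hx, mulVec_mulVec, mulVec_mulVec, Matrix.mul_sub, Matrix.mul_sub, hEE.eq,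
      mul_colSpaceProj_of_mul_eq hEW, hWE, transpose_mul_colSpaceProj hW, sub_self, zero_mulVec]
    exact ⟨rfl, rfl⟩
  · rintro ⟨hEx, hWx⟩
    rw [sub_mulVec, hEx, colSpaceProj, ← mulVec_mulVec, hWx, mulVec_zero, sub_zero]

lemma range_inf_orthogonal_range_mul [DecidableEq m] (hE : E.IsSymm) (hEE : IsIdempotentElem E)
    (G : Matrix m n ℝ) :
    LinearMap.range (toEuclideanLin E) ⊓ (LinearMap.range (toEuclideanLin (E * G)))ᗮ =
      LinearMap.range (toEuclideanLin E) ⊓ (LinearMap.range (toEuclideanLin G))ᗮ := by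
  ext x
  simp only [Submodule.mem_inf, mem_range_toEuclideanLin_iff_of_isIdempotentElem hEE,
    mem_orthogonal_range_toEuclideanLin_iff]
  exact and_congr_right fun hEx ↦ by rw [transpose_mul, hE.eq, ← mulVec_mulVec, hEx]

end ColumnSpaceProjection

end Matrix

open Matrix

theorem stmt9 {m r s : ℕ}
    (U : Matrix (Fin m) (Fin r) ℝ) (Q : Matrix (Fin m) (Fin (m - r)) ℝ)
    (G : Matrix (Fin m) (Fin s) ℝ)
    (hU : Uᵀ * U = 1) (hQ : Qᵀ * Q = 1) (hUQ : Uᵀ * Q = 0)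
    (hG : (Qᵀ * G).rank = s)
    (P : Matrix (Fin m) (Fin m) ℝ)
    (hP : P = Q * Qᵀ - (Q * Qᵀ * G) * (Gᵀ * (Q * Qᵀ) * G)⁻¹ * (Gᵀ * (Q * Qᵀ))) :
    P.IsSymm ∧ P * P = P ∧
      LinearMap.range (Matrix.toEuclideanLin P) =
        LinearMap.range (Matrix.toEuclideanLin Q) ⊓
          (LinearMap.range (Matrix.toEuclideanLin (Q * Qᵀ * G)))ᗮ ∧
      LinearMap.range (Matrix.toEuclideanLin Q) ⊓
          (LinearMap.range (Matrix.toEuclideanLin (Q * Qᵀ * G)))ᗮ =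
        (LinearMap.range (Matrix.toEuclideanLin U) ⊔
          LinearMap.range (Matrix.toEuclideanLin G))ᗮ := by
  have hE : (Q * Qᵀ).IsSymm := by simp [IsSymm, transpose_mul]
  have hEE := isIdempotentElem_mul_transpose hQ
  have hEW : Q * Qᵀ * (Q * Qᵀ * G) = Q * Qᵀ * G := by rw [← Matrix.mul_assoc, hEE.eq]
  have hW : (Q * Qᵀ * G).rank = Fintype.card (Fin s) := by
    rw [Matrix.mul_assoc, rank_mul_of_transpose_mul_self_eq_one hQ, hG, Fintype.card_fin]
  have hr : r ≤ m := by
    simpa [rank_eq_card_of_transpose_mul_self_eq_one hU] using rank_le_card_height U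
  rw [← colSpaceProj_mul hE hEE] at hP
  subst hP
  refine ⟨isSymm_sub_colSpaceProj hE, isIdempotentElem_sub_colSpaceProj hE hEE hEW hW, ?_, ?_⟩
  · rw [range_toEuclideanLin_sub_colSpaceProj hE hEE hEW hW, range_toEuclideanLin_mul_transpose hQ]
  · rw [← range_toEuclideanLin_mul_transpose hQ, range_inf_orthogonal_range_mul hE hEE,
      range_toEuclideanLin_mul_transpose hQ,
      range_toEuclideanLin_eq_orthogonal hU hQ hUQ (by simp only [Fintype.card_fin]; omega),
      Submodule.inf_orthogonal]
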